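/- Let M be a slant submanifold of a framed metric f-manifold with slant angle θ, i.e., T² = -cos²θ (I - Σₖ ηᵏ ⊗ ξₖ). Then the normal part N of φ satisfies g(NX, NY) = sin²θ {g(X,Y) - Σₖ ηᵏ(X)ηᵏ(Y)} for all X, Y tangent to M. -/

import Mathlib

open scoped RealInnerProductSpace

/-!
Split `φ = T + N` into its components along `W` and `Wᗮ`. By Pythagoras,
`g(NX, NY) = g(φX, φY) - g(TX, TY)`, and the compatibility of `g` gives the first term.
Since `T` inherits the skew-symmetry of `φ` on `W`, `g(TX, TY) = -g(T²X, Y)`, which the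
slant condition evaluates to `cos²θ {g(X,Y) - Σₖ ηᵏ(X)ηᵏ(Y)}`; then `1 - cos²θ = sin²θ`.
-/

namespace Submodule

variable {V : Type*} [NormedAddCommGroup V] [InnerProductSpace ℝ V]
  (W : Submodule ℝ V) [W.HasOrthogonalProjection]

theorem real_inner_sub_starProjection_sub_starProjection (u v : V) :
    ⟪u - W.starProjection u, v - W.starProjection v⟫
      = ⟪u, v⟫ - ⟪W.starProjection u, W.starProjection v⟫ := by
  have hu : ⟪u - W.starProjection u, W.starProjection v⟫ = 0 :=
    W.starProjection_inner_eq_zero u _ (W.starProjection_apply_mem v)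
  have hv : ⟪W.starProjection u, v - W.starProjection v⟫ = 0 := by
    rw [real_inner_comm]
    exact W.starProjection_inner_eq_zero v _ (W.starProjection_apply_mem u)
  simp only [inner_sub_left, inner_sub_right] at hu hv ⊢
  linarith

theorem real_inner_starProjection_apply_eq_neg_of_skew {φ : V → V}
    (hskew : ∀ X Y : V, ⟪φ X, Y⟫ = -⟪X, φ Y⟫) {a b : V} (ha : a ∈ W) (hb : b ∈ W) :
    ⟪W.starProjection (φ a), b⟫ = -⟪a, W.starProjection (φ b)⟫ := by
  rw [W.inner_starProjection_left_eq_right, (W.starProjection_eq_self_iff).2 hb, hskew,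
    ← (W.starProjection_eq_self_iff).2 ha, W.inner_starProjection_left_eq_right,
    (W.starProjection_eq_self_iff).2 ha]

end Submodule

theorem slant_submanifold_g_NX_NY_general
    {V : Type*} [NormedAddCommGroup V] [InnerProductSpace ℝ V]
    [FiniteDimensional ℝ V] {s : ℕ} (θ : ℝ)
    (φ : V →ₗ[ℝ] V) (ξ : Fin s → V) (η : Fin s → (V →ₗ[ℝ] ℝ))
    (W : Submodule ℝ V)
    (hη : ∀ (i : Fin s) (X : V), η i X = ⟪X, ξ i⟫)
    (hcompat : ∀ X Y : V, ⟪φ X, φ Y⟫ = ⟪X, Y⟫ - ∑ i, η i X * η i Y)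
    (hskew : ∀ X Y : V, ⟪φ X, Y⟫ = -⟪X, φ Y⟫)
    (T N : V → V) (hT : ∀ x : V, T x = (Submodule.orthogonalProjectionOnto W (φ x) : V))
    (hN : ∀ x : V, N x = φ x - (Submodule.orthogonalProjectionOnto W (φ x) : V))
    (hslant : ∀ x ∈ W, T (T x) = -(Real.cos θ ^ 2) • (x - ∑ k, η k x • ξ k)) :
    ∀ x ∈ W, ∀ y ∈ W,
      ⟪N x, N y⟫ = Real.sin θ ^ 2 * (⟪x, y⟫ - ∑ k, η k x * η k y) := by
  intro x hx y hy
  have hT_eq : ∀ z, T z = W.starProjection (φ z) := hT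
  have hT_sq : W.starProjection (φ (W.starProjection (φ x)))
      = -(Real.cos θ ^ 2) • (x - ∑ k, η k x • ξ k) := by
    rw [← hT_eq, ← hT_eq]; exact hslant x hx
  have hξη : ∀ k z, ⟪ξ k, z⟫ = η k z := fun k z => by rw [hη, real_inner_comm]
  have hTT : ⟪W.starProjection (φ x), W.starProjection (φ y)⟫
      = Real.cos θ ^ 2 * (⟪x, y⟫ - ∑ k, η k x * η k y) := by
    have h := W.real_inner_starProjection_apply_eq_neg_of_skew hskew
      (W.starProjection_apply_mem (φ x)) hy
    rw [hT_sq] at h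
    simp only [real_inner_smul_left, inner_sub_left, sum_inner, hξη] at h
    linarith
  calc ⟪N x, N y⟫
      = ⟪φ x, φ y⟫ - ⟪W.starProjection (φ x), W.starProjection (φ y)⟫ := by
        rw [hN x, hN y]
        exact W.real_inner_sub_starProjection_sub_starProjection (φ x) (φ y)
    _ = Real.sin θ ^ 2 * (⟪x, y⟫ - ∑ k, η k x * η k y) := by
        rw [hcompat, hTT, Real.sin_sq]; ring

/-- Let `M` be a `θ`-slant submanifold (tangent to all the `ξₖ`) of a framed
metric `f`-manifold, i.e. `T² = -cos²θ (I - Σₖ ηᵏ ⊗ ξₖ)` on `TM`. Then the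
normal part `N` of `φ` satisfies
`g(NX, NY) = sin²θ {g(X,Y) - Σₖ ηᵏ(X)ηᵏ(Y)}` for all tangent `X, Y`. -/
theorem slant_submanifold_g_NX_NY
    {V : Type*} [NormedAddCommGroup V] [InnerProductSpace ℝ V]
    [FiniteDimensional ℝ V] {s : ℕ} (θ : ℝ)
    (φ : V →ₗ[ℝ] V) (ξ : Fin s → V) (η : Fin s → (V →ₗ[ℝ] ℝ))
    (W : Submodule ℝ V)
    (hηξ : ∀ i j : Fin s, η j (ξ i) = if i = j then 1 else 0)
    (hφ2 : ∀ X : V, φ (φ X) = -X + ∑ i, η i X • ξ i)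
    (hη : ∀ (i : Fin s) (X : V), η i X = ⟪X, ξ i⟫)
    (hcompat : ∀ X Y : V, ⟪φ X, φ Y⟫ = ⟪X, Y⟫ - ∑ i, η i X * η i Y)
    (hskew : ∀ X Y : V, ⟪φ X, Y⟫ = -⟪X, φ Y⟫)
    (hξW : ∀ i : Fin s, ξ i ∈ W)
    (T N : V → V) (hT : ∀ x : V, T x = (Submodule.orthogonalProjectionOnto W (φ x) : V))
    (hN : ∀ x : V, N x = φ x - (Submodule.orthogonalProjectionOnto W (φ x) : V))
    (hslant : ∀ x ∈ W, T (T x) = -(Real.cos θ ^ 2) • (x - ∑ k, η k x • ξ k)) :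
    ∀ x ∈ W, ∀ y ∈ W,
      ⟪N x, N y⟫ = Real.sin θ ^ 2 * (⟪x, y⟫ - ∑ k, η k x * η k y) :=
  slant_submanifold_g_NX_NY_general θ φ ξ η W hη hcompat hskew T N hT hN hslant
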